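/- arXiv:2305.13841 — 2 statements merged into one kernel-verified Lean document; each statement's English description precedes it below -/
import Mathlib

section
/- Let A, B be self-adjoint ℂ-linear endomorphisms of EuclideanSpace ℂ (Fin n), let v ∈ ℂ^n, λ, μ ∈ ℝ, and let k ∈ Fin n be an index with Re(v k) ≠ 0. If A v − λ • B v = μ • (Complex.I • e_k), where e_k is the k-th standard basis vector, then μ = 0, and consequently v satisfies the generalized eigenvector equation A v = λ • B v. In other words, a solution of the phase-pinned first-order optimality conditions (with the imaginary part b_k of the k-th phase constrained) is automatically a generalized eigenvector, with vanishing Lagrange multiplier μ. -/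
open Complex

/-
Proof idea: `T = A - λ B` is self-adjoint because `λ` is real, so `⟪v, T v⟫` is real. Pairing
`T v = μ ι e_k` with `v` gives `⟪v, T v⟫ = μ ι conj (v k)`, whose imaginary part is `μ Re (v k)`.
Hence `μ Re (v k) = 0`, and `Re (v k) ≠ 0` forces `μ = 0`.
-/

theorem LinearMap.IsSymmetric.mul_re_inner_eq_zero_of_apply_eq_smul_I
    {E : Type*} [NormedAddCommGroup E] [InnerProductSpace ℂ E] {T : E →ₗ[ℂ] E}
    (hT : T.IsSymmetric) {v w : E} {mu : ℝ} (hv : T v = (mu : ℂ) • (I • w)) :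
    mu * (inner ℂ v w).re = 0 := by
  have him := hT.im_inner_self_apply v
  rw [hv, inner_smul_right, inner_smul_right] at him
  simpa using him

/-- Phase-pinned optimality conditions: for self-adjoint `A, B` on `EuclideanSpace ℂ (Fin n)`,
if `A v − λ•B v = μ • (ι • e_k)` where `e_k` is the `k`-th standard basis vector and the pinned
coordinate satisfies `Re(v k) ≠ 0`, then the Lagrange multiplier `μ` vanishes and `v` is a
generalized eigenvector: `A v = λ • B v`. -/
theorem pinned_multiplier_vanishes {n : ℕ}
    (A B : EuclideanSpace ℂ (Fin n) →ₗ[ℂ] EuclideanSpace ℂ (Fin n))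
    (hA : ∀ x y : EuclideanSpace ℂ (Fin n), (inner ℂ (A x) y : ℂ) = inner ℂ x (A y))
    (hB : ∀ x y : EuclideanSpace ℂ (Fin n), (inner ℂ (B x) y : ℂ) = inner ℂ x (B y))
    (v : EuclideanSpace ℂ (Fin n)) (lam mu : ℝ) (k : Fin n)
    (hk : (v k).re ≠ 0)
    (h : A v - (lam : ℂ) • B v = (mu : ℂ) • (Complex.I • EuclideanSpace.single k (1 : ℂ))) :
    mu = 0 ∧ A v = (lam : ℂ) • B v := by
  have hT : (A - (lam : ℂ) • B).IsSymmetric :=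
    LinearMap.IsSymmetric.sub hA (LinearMap.IsSymmetric.smul (conj_ofReal lam) hB)
  have hprod : mu * (v k).re = 0 := by
    simpa [EuclideanSpace.inner_single_right] using hT.mul_re_inner_eq_zero_of_apply_eq_smul_I h
  have hmu : mu = 0 := (mul_eq_zero.mp hprod).resolve_right hk
  exact ⟨hmu, by simpa [hmu, sub_eq_zero] using h⟩
end

section
/- Let A, B ∈ Matrix (Fin m) (Fin m) ℝ be symmetric matrices, λ ∈ ℝ, and let v, u ∈ ℝ^m satisfy A *ᵥ v = λ • (B *ᵥ v), A *ᵥ u = λ • (B *ᵥ u), v ⬝ᵥ (B *ᵥ v) ≠ 0, and suppose the kernel of (A − λ•B) is contained in the real span of {v, u}. Let e ∈ ℝ^m satisfy e ⬝ᵥ v = 0 and e ⬝ᵥ u ≠ 0. Then the linear map ℝ^m × ℝ × ℝ → ℝ^m × ℝ × ℝ given by (x, y, z) ↦ ( (A − λ•B) *ᵥ x − y • (B *ᵥ v) + z • e, −(B *ᵥ v) ⬝ᵥ x, e ⬝ᵥ x ) is bijective; i.e., the phase-pinned augmented saddle-point matrix [[A−λB, −Bv, e],[−(Bv)ᵀ,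 0, 0],[eᵀ, 0, 0]] is non-singular. -/
/-! Pairing the first block row with `v` and `u`, both in the kernel of the symmetric matrix
`A - λB`, annihilates the `(A - λB) x` term and leaves `y (v ⬝ Bv)` and `z (u ⬝ e)`, so the
multipliers vanish. Then `x` lies in the kernel, hence in `span {v, u}`, where the two
constraint rows `e ⬝ x = 0` and `Bv ⬝ x = 0` kill first the `u`- and then the `v`-coefficient.
An injective endomorphism of a finite-dimensional space is bijective. -/

open Matrix

variable {R ι : Type*} [CommRing R] [Fintype ι]

@[simps]
def pinnedSaddleMap (M : Matrix ι ι R) (w e : ι → R) :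
    (ι → R) × R × R →ₗ[R] (ι → R) × R × R where
  toFun p := (M *ᵥ p.1 - p.2.1 • w + p.2.2 • e, -(w ⬝ᵥ p.1), e ⬝ᵥ p.1)
  map_add' p q := by
    refine Prod.ext ?_ (Prod.ext ?_ ?_) <;>
      simp only [Prod.fst_add, Prod.snd_add, mulVec_add, dotProduct_add, add_smul]
    · abel
    · abel
  map_smul' c p := by
    refine Prod.ext ?_ (Prod.ext ?_ ?_) <;>
      simp only [Prod.smul_fst, Prod.smul_snd, mulVec_smul, dotProduct_smul, smul_eq_mul,
        RingHom.id_apply, smul_sub, smul_add, smul_smul, mul_neg]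

theorem Matrix.IsSymm.dotProduct_mulVec_eq_zero {M : Matrix ι ι R} (hM : M.IsSymm)
    {v : ι → R} (hv : M *ᵥ v = 0) (x : ι → R) : v ⬝ᵥ (M *ᵥ x) = 0 := by
  rw [dotProduct_mulVec, ← hM.eq, vecMul_transpose, hv, zero_dotProduct]

variable [NoZeroDivisors R]

theorem eq_zero_of_mem_span_pair_of_dotProduct_eq_zero {v u w e x : ι → R}
    (hvw : v ⬝ᵥ w ≠ 0) (hev : e ⬝ᵥ v = 0) (heu : e ⬝ᵥ u ≠ 0)
    (hx : x ∈ Submodule.span R {v, u}) (hwx : w ⬝ᵥ x = 0) (hex : e ⬝ᵥ x = 0) : x = 0 := by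
  obtain ⟨a, b, rfl⟩ := Submodule.mem_span_pair.mp hx
  have hb : b = 0 := by
    simpa [dotProduct_add, hev, heu] using hex
  have ha : a = 0 := by
    simpa [hb, dotProduct_comm w v, hvw] using hwx
  simp [ha, hb]

theorem snd_eq_zero_of_pinnedSaddleMap_fst_eq_zero {M : Matrix ι ι R} (hM : M.IsSymm)
    {v u w e : ι → R} (hv : M *ᵥ v = 0) (hu : M *ᵥ u = 0) (hvw : v ⬝ᵥ w ≠ 0)
    (hev : e ⬝ᵥ v = 0) (heu : e ⬝ᵥ u ≠ 0) {p : (ι → R) × R × R}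
    (h : (pinnedSaddleMap M w e p).1 = 0) : p.2 = 0 := by
  obtain ⟨x, y, z⟩ := p
  have hdot : ∀ t, t ⬝ᵥ (M *ᵥ x) - y * (t ⬝ᵥ w) + z * (t ⬝ᵥ e) = 0 := fun t => by
    simpa [dotProduct_add, dotProduct_sub] using congrArg (t ⬝ᵥ ·) h
  have hy : y = 0 := by
    simpa [hM.dotProduct_mulVec_eq_zero hv, dotProduct_comm v e, hev, hvw] using hdot v
  have hz : z = 0 := by
    simpa [hM.dotProduct_mulVec_eq_zero hu, dotProduct_comm u e, hy, heu] using hdot u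
  simp [hy, hz]

theorem pinnedSaddleMap_injective {M : Matrix ι ι R} (hM : M.IsSymm) {v u w e : ι → R}
    (hv : M *ᵥ v = 0) (hu : M *ᵥ u = 0) (hvw : v ⬝ᵥ w ≠ 0)
    (hker : ∀ x, M *ᵥ x = 0 → x ∈ Submodule.span R {v, u})
    (hev : e ⬝ᵥ v = 0) (heu : e ⬝ᵥ u ≠ 0) :
    Function.Injective (pinnedSaddleMap M w e) := by
  refine (injective_iff_map_eq_zero _).mpr fun p h => ?_
  have hp₂ : p.2 = 0 :=
    snd_eq_zero_of_pinnedSaddleMap_fst_eq_zero hM hv hu hvw hev heu (congrArg Prod.fst h)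
  obtain ⟨x, y, z⟩ := p
  obtain ⟨rfl, rfl⟩ := Prod.mk_eq_zero.mp hp₂
  simp only [pinnedSaddleMap_apply, zero_smul, sub_zero, add_zero, Prod.mk_eq_zero,
    neg_eq_zero] at h
  obtain ⟨hMx, hwx, hex⟩ := h
  simp [eq_zero_of_mem_span_pair_of_dotProduct_eq_zero hvw hev heu (hker x hMx) hwx hex]

theorem pinnedSaddleMap_bijective {K : Type*} [Field K] {M : Matrix ι ι K} (hM : M.IsSymm)
    {v u w e : ι → K} (hv : M *ᵥ v = 0) (hu : M *ᵥ u = 0) (hvw : v ⬝ᵥ w ≠ 0)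
    (hker : ∀ x, M *ᵥ x = 0 → x ∈ Submodule.span K {v, u})
    (hev : e ⬝ᵥ v = 0) (heu : e ⬝ᵥ u ≠ 0) :
    Function.Bijective (pinnedSaddleMap M w e) :=
  let hinj := pinnedSaddleMap_injective hM hv hu hvw hker hev heu
  ⟨hinj, LinearMap.injective_iff_surjective.mp hinj⟩

/-- Non-singularity of the phase-pinned augmented saddle-point system (Eq. (16)):
with symmetric `A, B`, generalized eigenvectors `v, u` for `λ` spanning (at least) the kernel
of `A − λB`, `v ⬝ (B v) ≠ 0`, and a pinning vector `e` with `e ⬝ v = 0` and `e ⬝ u ≠ 0`,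
the map `(x, y, z) ↦ ((A − λB) x − y (B v) + z e, −(B v) ⬝ x, e ⬝ x)` is bijective. -/
theorem pinned_saddle_point_nonsingular {m : ℕ}
    (A B : Matrix (Fin m) (Fin m) ℝ) (hA : A.IsSymm) (hB : B.IsSymm)
    (lam : ℝ) (v u e : Fin m → ℝ)
    (hv : A *ᵥ v = lam • (B *ᵥ v)) (hu : A *ᵥ u = lam • (B *ᵥ u))
    (hvBv : v ⬝ᵥ (B *ᵥ v) ≠ 0)
    (hker : ∀ x : Fin m → ℝ, (A - lam • B) *ᵥ x = 0 →
      x ∈ Submodule.span ℝ ({v, u} : Set (Fin m → ℝ)))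
    (hev : e ⬝ᵥ v = 0) (heu : e ⬝ᵥ u ≠ 0) :
    Function.Bijective (fun p : (Fin m → ℝ) × ℝ × ℝ =>
      (((A - lam • B) *ᵥ p.1 - p.2.1 • (B *ᵥ v) + p.2.2 • e,
        -((B *ᵥ v) ⬝ᵥ p.1), e ⬝ᵥ p.1) : (Fin m → ℝ) × ℝ × ℝ)) := by
  have hM : (A - lam • B).IsSymm := hA.sub (hB.smul lam)
  have hMv : (A - lam • B) *ᵥ v = 0 := by rw [sub_mulVec, smul_mulVec, hv, sub_self]
  have hMu : (A - lam • B) *ᵥ u = 0 := by rw [sub_mulVec, smul_mulVec, hu, sub_self]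
  exact pinnedSaddleMap_bijective hM hMv hMu hvBv hker hev heu
end
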